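/- arXiv:2009.13273 — 7 statements merged into one kernel-verified Lean document; each statement's English description precedes it below -/
import Mathlib

section
/- Let X, Z be metric spaces, z₀ ∈ Z, and δ > 0 with δ ≤ 2·d_GH(X,Z), where d_GH denotes the Gromov–Hausdorff distance. Let Z* be the space Z ∪ {z*} with the metric defined by: d(z*,z) = δ for z ∈ Z with d(z₀,z) ≤ δ, d(z*,z) = d(z₀,z) for z ∈ Z with d(z₀,z) > δ, and the original metric on Z. Then for every correspondence R between X and Z, the correspondence R* = R ∪ (R⁻¹(z₀) × {z*}) between X and Z* satisfies dis R* ≤ dis R, provided δ ≤ dis R. -/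
open scoped ENNReal

/-- A correspondence between `X` and `Y`: a relation whose projections are surjective. -/
def IsCorr {X Y : Type*} (R : Set (X × Y)) : Prop :=
  (∀ x : X, ∃ y : Y, (x, y) ∈ R) ∧ (∀ y : Y, ∃ x : X, (x, y) ∈ R)

/-- The distortion of a relation: `sup |d(x,x') - d(y,y')|` over pairs in `R`. -/
noncomputable def corrDis {X Y : Type*} [MetricSpace X] [MetricSpace Y]
    (R : Set (X × Y)) : ℝ≥0∞ :=
  ⨆ p ∈ R, ⨆ q ∈ R, edist (dist p.1 q.1) (dist p.2 q.2)

/-- The Gromov–Hausdorff distance: half the infimal distortion of correspondences. -/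
noncomputable def ghDist (X Y : Type*) [MetricSpace X] [MetricSpace Y] : ℝ≥0∞ :=
  (⨅ (R : Set (X × Y)) (_ : IsCorr R), corrDis R) / 2

/-- The distance on `Z* = Z ∪ {z*}` (`z* = none`): `δ` on the closed `δ`-ball around `z₀`,
`dist z₀ z` outside it, and the original metric on `Z`. -/
noncomputable def dStar {Z : Type*} [MetricSpace Z] (z₀ : Z) (δ : ℝ) :
    Option Z → Option Z → ℝ
  | some z, some z' => dist z z'
  | some z, none => if dist z₀ z ≤ δ then δ else dist z₀ z
  | none, some z => if dist z₀ z ≤ δ then δ else dist z₀ z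
  | none, none => 0

lemma corrDis_pair_le {X Y : Type*} [MetricSpace X] [MetricSpace Y] {R : Set (X × Y)}
    {p q : X × Y} (hp : p ∈ R) (hq : q ∈ R) :
    edist (dist p.1 q.1) (dist p.2 q.2) ≤ corrDis R :=
  le_iSup₂_of_le p hp (le_iSup₂_of_le q hq le_rfl)

lemma key_ineq {x d δ : ℝ} (hx : 0 ≤ x) (hd : 0 ≤ d) (hdδ : d ≤ δ) {C : ℝ≥0∞}
    (h1 : edist x d ≤ C) (h2 : ENNReal.ofReal δ ≤ C) : edist x δ ≤ C := by
  rw [edist_dist, Real.dist_eq]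
  rcases le_or_gt x δ with h | h
  · refine le_trans (ENNReal.ofReal_le_ofReal ?_) h2
    rw [abs_sub_comm, abs_of_nonneg (by linarith)]; linarith
  · refine le_trans ?_ h1
    rw [edist_dist, Real.dist_eq]
    apply ENNReal.ofReal_le_ofReal
    rw [abs_of_nonneg (by linarith)]
    calc x - δ ≤ x - d := by linarith
    _ ≤ |x - d| := le_abs_self _

/-- For any correspondence `R` between `X` and `Z`, the correspondence
`R* = R ∪ (R⁻¹(z₀) × {z*})` between `X` and `Z* = Z ∪ {z*}` satisfies `dis R* ≤ dis R`,
provided `δ ≤ 2 d_GH(X,Z)` and `δ ≤ dis R`. -/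
theorem stmt1 {X Z : Type*} [MetricSpace X] [MetricSpace Z] (z₀ : Z) (δ : ℝ)
    (hδ : 0 < δ) (hδGH : ENNReal.ofReal δ ≤ 2 * ghDist X Z)
    [MetricSpace (Option Z)] (hm : ∀ a b : Option Z, dist a b = dStar z₀ δ a b)
    (R : Set (X × Z)) (hR : IsCorr R)
    (hδR : ENNReal.ofReal δ ≤ corrDis R) :
    IsCorr ({p : X × Option Z | ∃ z : Z, p.2 = some z ∧ (p.1, z) ∈ R} ∪
        {p : X × Option Z | p.2 = none ∧ (p.1, z₀) ∈ R}) ∧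
    corrDis ({p : X × Option Z | ∃ z : Z, p.2 = some z ∧ (p.1, z) ∈ R} ∪
        {p : X × Option Z | p.2 = none ∧ (p.1, z₀) ∈ R}) ≤ corrDis R := by
  constructor
  · constructor
    · intro x
      obtain ⟨z, hz⟩ := hR.1 x
      exact ⟨some z, Or.inl ⟨z, rfl, hz⟩⟩
    · intro y
      cases y with
      | none => obtain ⟨x, hx⟩ := hR.2 z₀; exact ⟨x, Or.inr ⟨rfl, hx⟩⟩
      | some z => obtain ⟨x, hx⟩ := hR.2 z; exact ⟨x, Or.inl ⟨z, rfl, hx⟩⟩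
  · refine iSup₂_le fun p hp => iSup₂_le fun q hq => ?_
    rw [hm p.2 q.2]
    rcases hp with ⟨z, hz2, hzR⟩ | ⟨hz2, hzR⟩ <;> rcases hq with ⟨w, hw2, hwR⟩ | ⟨hw2, hwR⟩ <;>
      rw [hz2, hw2]
    · exact corrDis_pair_le (p := (p.1, z)) (q := (q.1, w)) hzR hwR
    · show edist _ (if dist z₀ z ≤ δ then δ else dist z₀ z) ≤ _
      split_ifs with h
      · refine key_ineq dist_nonneg dist_nonneg h ?_ hδR
        have := corrDis_pair_le (p := (p.1, z)) (q := (q.1, z₀)) hzR hwR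
        simpa [dist_comm z z₀] using this
      · have := corrDis_pair_le (p := (p.1, z)) (q := (q.1, z₀)) hzR hwR
        simpa [dist_comm z z₀] using this
    · show edist _ (if dist z₀ w ≤ δ then δ else dist z₀ w) ≤ _
      split_ifs with h
      · refine key_ineq dist_nonneg dist_nonneg h ?_ hδR
        exact corrDis_pair_le (p := (p.1, z₀)) (q := (q.1, w)) hzR hwR
      · exact corrDis_pair_le (p := (p.1, z₀)) (q := (q.1, w)) hzR hwR
    · show edist _ (0 : ℝ) ≤ _
      have := corrDis_pair_le (p := (p.1, z₀)) (q := (q.1, z₀)) hzR hwR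
      simpa using this
end

section
/- Let X, Z be metric spaces, z₀ ∈ Z, and 0 < δ ≤ 2·d_GH(X,Z). Let Z* be Z with one extra point z* attached, where d(z*,z) = δ if d(z₀,z) ≤ δ, d(z*,z) = d(z₀,z) if d(z₀,z) > δ. Then d_GH(X, Z*) ≤ d_GH(X, Z). -/
open scoped ENNReal

/-!
Given a correspondence `R` between `X` and `Z`, let `z*` have the same partners as `z₀`.
Distances from `z*` are those from `z₀`, except that values at most `δ` are raised to `δ`;
since distances in `X` are nonnegative, this cannot push the distortion above
`max (dis R) δ`, and `δ ≤ 2 d_GH(X, Z) ≤ dis R`.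
-/

section GromovHausdorff

variable {X Y Z : Type*} [MetricSpace X] [MetricSpace Y] [MetricSpace Z]

lemma le_corrDis {R : Set (X × Y)} {p q : X × Y} (hp : p ∈ R) (hq : q ∈ R) :
    edist (dist p.1 q.1) (dist p.2 q.2) ≤ corrDis R :=
  le_iSup₂_of_le p hp (le_iSup₂_of_le q hq le_rfl)

lemma two_mul_ghDist_le_corrDis {R : Set (X × Y)} (hR : IsCorr R) :
    2 * ghDist X Y ≤ corrDis R := by
  rw [ghDist, ENNReal.mul_div_cancel two_ne_zero ENNReal.ofNat_ne_top]
  exact iInf₂_le R hR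

lemma ghDist_le_ghDist_of_forall_isCorr
    (h : ∀ R : Set (X × Z), IsCorr R → ∃ S : Set (X × Y), IsCorr S ∧ corrDis S ≤ corrDis R) :
    ghDist X Y ≤ ghDist X Z := by
  refine ENNReal.div_le_div_right (le_iInf₂ fun R hR => ?_) 2
  obtain ⟨S, hS, hSR⟩ := h R hR
  exact (iInf₂_le S hS).trans hSR

end GromovHausdorff

lemma abs_sub_max_le_max_abs_sub {a c δ : ℝ} (ha : 0 ≤ a) :
    |a - max c δ| ≤ max |a - c| δ := by
  rcases le_total c δ with hcδ | hδc
  · rw [max_eq_right hcδ, abs_le]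
    exact ⟨by linarith [le_max_right |a - c| δ],
      by linarith [le_abs_self (a - c), le_max_left |a - c| δ]⟩
  · rw [max_eq_left hδc]
    exact le_max_left _ _

lemma edist_max_le_max_edist {a c δ : ℝ} (ha : 0 ≤ a) :
    edist a (max c δ) ≤ max (edist a c) (ENNReal.ofReal δ) := by
  simp only [edist_dist, Real.dist_eq, ← ENNReal.ofReal_max]
  exact ENNReal.ofReal_le_ofReal (abs_sub_max_le_max_abs_sub ha)

section OnePointExtension

variable {X Z : Type*}

def extendCorr (z₀ : Z) (R : Set (X × Z)) : Set (X × Option Z) :=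
  {p | (p.1, p.2.getD z₀) ∈ R}

lemma IsCorr.extendCorr {R : Set (X × Z)} (hR : IsCorr R) (z₀ : Z) :
    IsCorr (extendCorr z₀ R) := by
  refine ⟨fun x => ?_, fun o => hR.2 (o.getD z₀)⟩
  obtain ⟨z, hz⟩ := hR.1 x
  exact ⟨some z, hz⟩

variable [MetricSpace X] [MetricSpace Z]

lemma dStar_some_none (z₀ : Z) (δ : ℝ) (z : Z) :
    dStar z₀ δ (some z) none = max (dist z₀ z) δ :=
  (max_def _ _).symm

lemma edist_dist_le_max_edist_dist_getD [MetricSpace (Option Z)] {z₀ : Z} {δ : ℝ}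
    (hm : ∀ a b : Option Z, dist a b = dStar z₀ δ a b) {a : ℝ} (ha : 0 ≤ a) (o o' : Option Z) :
    edist a (dist o o') ≤ max (edist a (dist (o.getD z₀) (o'.getD z₀))) (ENNReal.ofReal δ) := by
  have hsome_none (z : Z) : dist (some z) none = max (dist z₀ z) δ := by
    rw [hm, dStar_some_none]
  rcases o with _ | z <;> rcases o' with _ | z'
  · rw [hm, Option.getD_none, dist_self]
    exact le_max_left _ _
  · rw [dist_comm, hsome_none, Option.getD_none, Option.getD_some]
    exact edist_max_le_max_edist ha
  · rw [hsome_none, Option.getD_none, Option.getD_some, dist_comm z]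
    exact edist_max_le_max_edist ha
  · rw [hm]
    exact le_max_left _ _

lemma corrDis_extendCorr_le [MetricSpace (Option Z)] {z₀ : Z} {δ : ℝ}
    (hm : ∀ a b : Option Z, dist a b = dStar z₀ δ a b) (R : Set (X × Z)) :
    corrDis (extendCorr z₀ R) ≤ max (corrDis R) (ENNReal.ofReal δ) :=
  iSup₂_le fun p hp => iSup₂_le fun q hq =>
    (edist_dist_le_max_edist_dist_getD hm dist_nonneg p.2 q.2).trans
      (max_le_max_right _ (le_corrDis (p := (p.1, p.2.getD z₀)) hp hq))

end OnePointExtension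

theorem stmt2_general {X Z : Type*} [MetricSpace X] [MetricSpace Z] (z₀ : Z) (δ : ℝ)
    (hδGH : ENNReal.ofReal δ ≤ 2 * ghDist X Z)
    [MetricSpace (Option Z)] (hm : ∀ a b : Option Z, dist a b = dStar z₀ δ a b) :
    ghDist X (Option Z) ≤ ghDist X Z := by
  refine ghDist_le_ghDist_of_forall_isCorr fun R hR => ⟨extendCorr z₀ R, hR.extendCorr z₀, ?_⟩
  have hδR : ENNReal.ofReal δ ≤ corrDis R := hδGH.trans (two_mul_ghDist_le_corrDis hR)
  calc corrDis (extendCorr z₀ R) ≤ max (corrDis R) (ENNReal.ofReal δ) := corrDis_extendCorr_le hm R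
    _ = corrDis R := max_eq_left hδR

/-- Adjoining the extra point `z*` does not increase the Gromov–Hausdorff distance to `X`. -/
theorem stmt2 {X Z : Type*} [MetricSpace X] [MetricSpace Z] (z₀ : Z) (δ : ℝ)
    (hδ : 0 < δ) (hδGH : ENNReal.ofReal δ ≤ 2 * ghDist X Z)
    [MetricSpace (Option Z)] (hm : ∀ a b : Option Z, dist a b = dStar z₀ δ a b) :
    ghDist X (Option Z) ≤ ghDist X Z :=
  stmt2_general z₀ δ hδGH hm
end

section
/- Let X, Z be metric spaces, z* ∈ Z an isolated point with S(z*) = inf{d(z*,z) : z ≠ z*}, and 0 < μ < min{2·d_GH(X,Z), 2·S(z*)}. Let W be Z with z* replaced by a simplex μΔ_I on a nonempty index set I (pairwise distances μ, each simplex point at distance d(z*,w) from w ∈ Z∖{z*}). For any correspondence R between X and Z, define V between X and W by: (x,w) ∈ V iff (w ∈ Z∖{z*} and (x,w) ∈ R) or (w ∈ I and (x,z*) ∈ R). Then V is a correspondence and dis V ≤ dis R. -/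
open scoped ENNReal

/-- The distance on `W = I ⊔ (Z ∖ {z*})`: the original metric on `Z ∖ {z*}`, `μ` between
distinct simplex vertices `i ∈ I`, and `dist z* w` between simplex vertices and `w ∈ Z ∖ {z*}`. -/
noncomputable def dW {Z : Type*} [MetricSpace Z] (zs : Z) (μ : ℝ) {I : Type*} [DecidableEq I] :
    I ⊕ {z : Z // z ≠ zs} → I ⊕ {z : Z // z ≠ zs} → ℝ
  | Sum.inl i, Sum.inl j => if i = j then 0 else μ
  | Sum.inl _, Sum.inr w => dist zs w.1
  | Sum.inr w, Sum.inl _ => dist zs w.1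
  | Sum.inr w, Sum.inr w' => dist w.1 w'.1

/-- `S(z*) = inf {d(z*,z) : z ≠ z*}`. -/
noncomputable def isolR {Z : Type*} [MetricSpace Z] (zs : Z) : ℝ :=
  sInf {r : ℝ | ∃ z : Z, z ≠ zs ∧ r = dist zs z}

/-- For any correspondence `R` between `X` and `Z`, the relation `V` between `X` and `W`
(obtained by sending everything related to `z*` to the whole simplex) is a correspondence
with `dis V ≤ dis R`. -/
theorem stmt5 {X Z : Type*} [MetricSpace X] [MetricSpace Z] (zs : Z)
    (hiso : 0 < isolR zs) (μ : ℝ) (hμ0 : 0 < μ)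
    (hμX : ENNReal.ofReal μ < 2 * ghDist X Z) (hμS : μ < 2 * isolR zs)
    {I : Type*} [DecidableEq I] [Nonempty I]
    [MetricSpace (I ⊕ {z : Z // z ≠ zs})]
    (hm : ∀ a b : I ⊕ {z : Z // z ≠ zs}, dist a b = dW zs μ a b)
    (R : Set (X × Z)) (hR : IsCorr R) :
    IsCorr {p : X × (I ⊕ {z : Z // z ≠ zs}) |
        (∃ w : {z : Z // z ≠ zs}, p.2 = Sum.inr w ∧ (p.1, w.1) ∈ R) ∨
        (∃ i : I, p.2 = Sum.inl i ∧ (p.1, zs) ∈ R)} ∧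
    corrDis {p : X × (I ⊕ {z : Z // z ≠ zs}) |
        (∃ w : {z : Z // z ≠ zs}, p.2 = Sum.inr w ∧ (p.1, w.1) ∈ R) ∨
        (∃ i : I, p.2 = Sum.inl i ∧ (p.1, zs) ∈ R)} ≤ corrDis R := by

  classical
  set V : Set (X × (I ⊕ {z : Z // z ≠ zs})) := {p : X × (I ⊕ {z : Z // z ≠ zs}) |
        (∃ w : {z : Z // z ≠ zs}, p.2 = Sum.inr w ∧ (p.1, w.1) ∈ R) ∨
        (∃ i : I, p.2 = Sum.inl i ∧ (p.1, zs) ∈ R)} with hV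
  have hle : ∀ p ∈ R, ∀ q ∈ R, edist (dist p.1 q.1) (dist p.2 q.2) ≤ corrDis R := by
    intro p hp q hq
    exact le_iSup₂_of_le p hp (le_iSup₂_of_le q hq le_rfl)
  have hμR : ENNReal.ofReal μ ≤ corrDis R := by
    have h2 : 2 * ghDist X Z = ⨅ (R : Set (X × Z)) (_ : IsCorr R), corrDis R := by
      rw [ghDist, ENNReal.mul_div_cancel' (by norm_num) (by norm_num)]
    rw [h2] at hμX
    exact le_of_lt (lt_of_lt_of_le hμX (iInf₂_le R hR))
  refine ⟨⟨?_, ?_⟩, ?_⟩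
  · intro x
    obtain ⟨z, hz⟩ := hR.1 x
    by_cases hzz : z = zs
    · exact ⟨Sum.inl (Classical.arbitrary I), Or.inr ⟨Classical.arbitrary I, rfl, hzz ▸ hz⟩⟩
    · exact ⟨Sum.inr ⟨z, hzz⟩, Or.inl ⟨⟨z, hzz⟩, rfl, hz⟩⟩
  · rintro (i | w)
    · obtain ⟨x, hx⟩ := hR.2 zs
      exact ⟨x, Or.inr ⟨i, rfl, hx⟩⟩
    · obtain ⟨x, hx⟩ := hR.2 w.1
      exact ⟨x, Or.inl ⟨w, rfl, hx⟩⟩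
  · refine iSup₂_le fun p hp => iSup₂_le fun q hq => ?_
    obtain ⟨x, px⟩ := p
    obtain ⟨x', qx⟩ := q
    have key : ∀ a b : ℝ, 0 ≤ a → 0 ≤ b → edist a b ≤ max (ENNReal.ofReal a) (ENNReal.ofReal b) := by
      intro a b ha hb
      rw [edist_dist, Real.dist_eq]
      rcases le_total a b with h | h
      · refine le_trans ?_ (le_max_right _ _)
        exact ENNReal.ofReal_le_ofReal (by rw [abs_of_nonpos (by linarith)]; linarith)
      · refine le_trans ?_ (le_max_left _ _)
        exact ENNReal.ofReal_le_ofReal (by rw [abs_of_nonneg (by linarith)]; linarith)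
    rcases hp with ⟨w, hw, hpr⟩ | ⟨i, hi, hpr⟩ <;> rcases hq with ⟨w', hw', hqr⟩ | ⟨j, hj, hqr⟩ <;>
      subst_vars <;> simp only [hm, dW]
    · exact hle _ hpr _ hqr
    · rw [dist_comm zs w.1] at *
      simpa using hle _ hpr _ hqr
    · exact hle _ hpr _ hqr
    · by_cases hij : i = j
      · simp only [hij, if_pos rfl]
        have := hle _ hpr _ hqr
        simpa using this
      · rw [if_neg hij]
        have hxx : ENNReal.ofReal (dist x x') ≤ corrDis R := by
          have := hle _ hpr _ hqr
          simpa [edist_dist] using this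
        exact le_trans (key _ _ dist_nonneg hμ0.le) (max_le hxx hμR)
end

section
/- Let X, Y be compact metric spaces with d_GH(X,Y) > 0, and suppose that for every positive integer m there is a compact metric space W(m) with d_GH(X,W(m)) + d_GH(W(m),Y) = d_GH(X,Y) such that W(m) contains an m-point subset with all pairwise distances equal to some fixed μ > 0. Then the family {W(m)} is not precompact in the Gromov–Hausdorff metric, and hence the metric segment [X,Y] (within compact metric spaces up to isometry) is not compact. -/
/-!
An `m`-point `μ`-equilateral set in `W m` survives, with distances shrunk by at most `2ε`, in any
compact space at Gromov–Hausdorff distance `< ε`. A finite `μ/8`-net of the family `{W m}` would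
therefore bound the size of `μ/2`-separated sets in all the `W m` by the packing numbers of
finitely many compact spaces, which are finite; this fails for `m` large. The segment `[X,Y]`
contains the family, so it is not compact either.
-/

open GromovHausdorff Metric Set
open scoped NNReal ENNReal

namespace Metric

lemma packingNumber_ne_top_of_totallyBounded {X : Type*} [PseudoEMetricSpace X] {ε : ℝ≥0}
    (hε : ε ≠ 0) {A : Set X} (hA : TotallyBounded A) : packingNumber ε A ≠ ⊤ := by
  obtain ⟨C, -, hCfin, hC⟩ :=
    exists_finite_isCover_of_totallyBounded (ε := ε / 2) (by positivity) hA
  refine ne_top_of_le_ne_top hCfin.encard_lt_top.ne ?_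
  calc packingNumber ε A = packingNumber (2 * (ε / 2)) A := by rw [mul_div_cancel₀ _ two_ne_zero]
    _ ≤ externalCoveringNumber (ε / 2) A := packingNumber_two_mul_le_externalCoveringNumber _ _
    _ ≤ C.encard := hC.externalCoveringNumber_le_encard

variable {X Y : Type*} [PseudoMetricSpace X] [PseudoMetricSpace Y]

lemma coe_lt_edist_iff {ε : ℝ≥0} {x y : X} : (ε : ℝ≥0∞) < edist x y ↔ (ε : ℝ) < dist x y := by
  rw [edist_nndist, ENNReal.coe_lt_coe, ← NNReal.coe_lt_coe, coe_nndist]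

lemma packingNumber_add_le_of_dist_le_add {g : X → Y} {η : ℝ≥0}
    (hg : ∀ a b, dist a b ≤ dist (g a) (g b) + η) {A : Set X} {B : Set Y} (hAB : MapsTo g A B)
    (δ : ℝ≥0) : packingNumber (δ + η) A ≤ packingNumber δ B := by
  simp only [packingNumber, iSup_le_iff]
  intro C hCA hC
  have hinj : InjOn g C := fun a ha b hb hab => hC.eq ha hb <| by
    rw [coe_lt_edist_iff, not_lt]
    have := hg a b
    rw [hab, dist_self] at this
    push_cast
    linarith [δ.coe_nonneg]
  have hsep : IsSeparated δ (g '' C) := by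
    rintro _ ⟨a, ha, rfl⟩ _ ⟨b, hb, rfl⟩ hne
    have : _ < _ := hC ha hb (ne_of_apply_ne g hne)
    rw [coe_lt_edist_iff] at this ⊢
    push_cast at this
    linarith [hg a b]
  calc C.encard = (g '' C).encard := hinj.encard_image.symm
    _ ≤ packingNumber δ B :=
      hsep.encard_le_packingNumber (hAB.mono_left hCA).image_subset

end Metric

namespace GromovHausdorff

universe u

variable {Z V : Type*} [MetricSpace Z] [CompactSpace Z] [Nonempty Z]
  [MetricSpace V] [CompactSpace V] [Nonempty V]

lemma exists_dist_le_dist_add_of_ghDist_lt {ε : ℝ} (h : ghDist Z V < ε) :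
    ∃ g : Z → V, ∀ a b, dist a b ≤ dist (g a) (g b) + 2 * ε := by
  obtain ⟨Φ, Ψ, hΦ, hΨ, hd⟩ := ghDist_eq_hausdorffDist Z V
  rw [hd] at h
  have hfin : hausdorffEDist (range Φ) (range Ψ) ≠ ⊤ :=
    hausdorffEDist_ne_top_of_nonempty_of_bounded (range_nonempty _) (range_nonempty _)
      (isCompact_range hΦ.continuous).isBounded (isCompact_range hΨ.continuous).isBounded
  have hclose : ∀ z, ∃ v, dist (Φ z) (Ψ v) < ε := fun z => by
    obtain ⟨_, ⟨v, rfl⟩, hv⟩ := exists_dist_lt_of_hausdorffDist_lt (mem_range_self z) h hfin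
    exact ⟨v, hv⟩
  choose g hg using hclose
  refine ⟨g, fun a b => ?_⟩
  calc dist a b = dist (Φ a) (Φ b) := (hΦ.dist_eq a b).symm
    _ ≤ dist (Φ a) (Ψ (g a)) + dist (Ψ (g a)) (Ψ (g b)) + dist (Ψ (g b)) (Φ b) :=
      dist_triangle4 _ _ _ _
    _ ≤ dist (g a) (g b) + 2 * ε := by
      rw [hΨ.dist_eq, dist_comm (Ψ (g b))]
      linarith [hg a, hg b]

lemma packingNumber_add_two_mul_le_of_ghDist_lt {ε : ℝ≥0} (h : ghDist Z V < ε) (δ : ℝ≥0) :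
    packingNumber (δ + 2 * ε) (univ : Set Z) ≤ packingNumber δ (univ : Set V) := by
  obtain ⟨g, hg⟩ := exists_dist_le_dist_add_of_ghDist_lt h
  exact packingNumber_add_le_of_dist_le_add (by push_cast; exact hg) (mapsTo_univ g _) δ

lemma exists_packingNumber_le_of_totallyBounded {s : Set GHSpace} (hs : TotallyBounded s)
    {δ : ℝ≥0} (hδ : δ ≠ 0) : ∃ N : ℕ, ∀ (Z : Type u) [MetricSpace Z] [CompactSpace Z]
      [Nonempty Z], toGHSpace Z ∈ s → packingNumber δ (univ : Set Z) ≤ N := by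
  obtain ⟨t, htfin, hcov⟩ := totallyBounded_iff.1 hs (δ / 4 : ℝ≥0) (by positivity)
  have hfin (c : GHSpace) : packingNumber (δ / 2) (univ : Set c.Rep) ≠ ⊤ :=
    packingNumber_ne_top_of_totallyBounded (by positivity) isCompact_univ.totallyBounded
  refine ⟨htfin.toFinset.sup fun c => (packingNumber (δ / 2) (univ : Set c.Rep)).toNat,
    fun Z _ _ _ hZ => ?_⟩
  obtain ⟨c, hc, hZc⟩ := mem_iUnion₂.1 (hcov hZ)
  have hghDist : ghDist Z c.Rep < (δ / 4 : ℝ≥0) := by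
    rwa [ghDist, c.toGHSpace_rep, ← mem_ball]
  calc packingNumber δ (univ : Set Z) = packingNumber (δ / 2 + 2 * (δ / 4)) univ := by
        congr 1; ring
    _ ≤ packingNumber (δ / 2) (univ : Set c.Rep) :=
      packingNumber_add_two_mul_le_of_ghDist_lt hghDist _
    _ = (packingNumber (δ / 2) (univ : Set c.Rep)).toNat := (ENat.natCast_toNat (hfin c)).symm
    _ ≤ _ := by exact_mod_cast Finset.le_sup (f := fun c : GHSpace =>
        (packingNumber (δ / 2) (univ : Set c.Rep)).toNat) (htfin.mem_toFinset.2 hc)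

end GromovHausdorff

theorem stmt9_general {X Y : Type*} [MetricSpace X] [CompactSpace X] [Nonempty X]
    [MetricSpace Y] [CompactSpace Y] [Nonempty Y]
    (W : ℕ → Type) [∀ m, MetricSpace (W m)] [∀ m, CompactSpace (W m)] [∀ m, Nonempty (W m)]
    (μ : ℝ) (hμ : 0 < μ)
    (hseg : ∀ m, GromovHausdorff.ghDist X (W m) + GromovHausdorff.ghDist (W m) Y =
      GromovHausdorff.ghDist X Y)
    (hsim : ∀ m, 1 ≤ m → ∃ S : Finset (W m), S.card = m ∧
      ∀ s ∈ S, ∀ s' ∈ S, s ≠ s' → dist s s' = μ) :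
    ¬ TotallyBounded (Set.range fun m => GromovHausdorff.toGHSpace (W m)) ∧
    ¬ IsCompact {p : GromovHausdorff.GHSpace |
        dist (GromovHausdorff.toGHSpace X) p + dist p (GromovHausdorff.toGHSpace Y) =
          dist (GromovHausdorff.toGHSpace X) (GromovHausdorff.toGHSpace Y)} := by
  have hfamily : ¬ TotallyBounded (range fun m => toGHSpace (W m)) := by
    intro htb
    obtain ⟨N, hN⟩ := exists_packingNumber_le_of_totallyBounded htb
      (Real.toNNReal_pos.2 (half_pos hμ)).ne'
    obtain ⟨S, hcard, hS⟩ := hsim (N + 1) (Nat.le_add_left 1 N)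
    have hsep : IsSeparated (μ / 2).toNNReal (S : Set (W (N + 1))) := fun a ha b hb hab => by
      change _ < _
      rw [coe_lt_edist_iff, Real.coe_toNNReal _ (half_pos hμ).le, hS a ha b hb hab]
      exact half_lt_self hμ
    have hle := (hsep.encard_le_packingNumber (subset_univ _)).trans (hN _ ⟨N + 1, rfl⟩)
    rw [encard_coe_eq_coe_finsetCard, hcard] at hle
    exact absurd (ENat.natCast_le_natCast.1 hle) N.lt_succ_self.not_ge
  refine ⟨hfamily, fun hcomp => hfamily (hcomp.totallyBounded.subset ?_)⟩
  rintro _ ⟨m, rfl⟩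
  exact hseg m

/-- If every positive integer `m` admits a compact space `W m` on the segment `[X,Y]`
containing an `m`-point `μ`-simplex, then the family `{W m}` is not precompact (not totally
bounded) in the Gromov–Hausdorff space, and the metric segment `[X,Y]` is not compact. -/
theorem stmt9 {X Y : Type*} [MetricSpace X] [CompactSpace X] [Nonempty X]
    [MetricSpace Y] [CompactSpace Y] [Nonempty Y]
    (hXY : 0 < GromovHausdorff.ghDist X Y)
    (W : ℕ → Type) [∀ m, MetricSpace (W m)] [∀ m, CompactSpace (W m)] [∀ m, Nonempty (W m)]
    (μ : ℝ) (hμ : 0 < μ)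
    (hseg : ∀ m, GromovHausdorff.ghDist X (W m) + GromovHausdorff.ghDist (W m) Y =
      GromovHausdorff.ghDist X Y)
    (hsim : ∀ m, 1 ≤ m → ∃ S : Finset (W m), S.card = m ∧
      ∀ s ∈ S, ∀ s' ∈ S, s ≠ s' → dist s s' = μ) :
    ¬ TotallyBounded (Set.range fun m => GromovHausdorff.toGHSpace (W m)) ∧
    ¬ IsCompact {p : GromovHausdorff.GHSpace |
        dist (GromovHausdorff.toGHSpace X) p + dist p (GromovHausdorff.toGHSpace Y) =
          dist (GromovHausdorff.toGHSpace X) (GromovHausdorff.toGHSpace Y)} :=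
  stmt9_general W μ hμ hseg hsim
end

section
/- Let X, Y be metric spaces and R a correspondence between X and Y. For s, t ∈ (0,1), the identity map on R, viewed as a map from (R, d_s) to (R, d_t), yields d_GH(R_s, R_t) ≤ (1/2)|s − t|·dis R, where R_u denotes R with metric d_u((x,y),(x',y')) = (1−u)d_X(x,x') + u·d_Y(y,y'). -/
open scoped ENNReal

/-- For `s, t ∈ (0,1)`, the spaces `R_s` and `R_t` (the correspondence `R` with the
convex-combination metrics) satisfy `d_GH(R_s, R_t) ≤ (1/2)|s - t| · dis R`. -/
theorem stmt12 {X Y : Type*} [MetricSpace X] [MetricSpace Y]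
    (R : Set (X × Y)) (hR : IsCorr R)
    (s t : ℝ) (hs : s ∈ Set.Ioo (0 : ℝ) 1) (ht : t ∈ Set.Ioo (0 : ℝ) 1)
    (ms mt : MetricSpace R)
    (hms : ∀ a b : R, @dist R ms.toDist a b =
      (1 - s) * dist a.1.1 b.1.1 + s * dist a.1.2 b.1.2)
    (hmt : ∀ a b : R, @dist R mt.toDist a b =
      (1 - t) * dist a.1.1 b.1.1 + t * dist a.1.2 b.1.2) :
    @ghDist R R ms mt ≤ ENNReal.ofReal (|s - t| / 2) * corrDis R := by
  classical
  set D : Set (↥R × ↥R) := {p | p.1 = p.2} with hD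
  have hDcorr : IsCorr D := ⟨fun a => ⟨a, rfl⟩, fun a => ⟨a, rfl⟩⟩
  -- bound the distortion of the diagonal correspondence
  have key : @corrDis R R ms mt D ≤ ENNReal.ofReal |s - t| * corrDis R := by
    refine iSup₂_le fun p hp => iSup₂_le fun q hq => ?_
    have hp' : p.1 = p.2 := hp
    have hq' : q.1 = q.2 := hq
    set a : R := p.1
    set b : R := q.1
    have : edist (@dist R ms.toDist p.1 q.1) (@dist R mt.toDist p.2 q.2)
        = edist (@dist R ms.toDist a b) (@dist R mt.toDist a b) := by
      rw [← hp', ← hq']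
    rw [this, hms a b, hmt a b, edist_dist, Real.dist_eq]
    have habs : |(1 - s) * dist a.1.1 b.1.1 + s * dist a.1.2 b.1.2 -
        ((1 - t) * dist a.1.1 b.1.1 + t * dist a.1.2 b.1.2)|
        = |s - t| * |dist a.1.2 b.1.2 - dist a.1.1 b.1.1| := by
      rw [← abs_mul]
      ring_nf
    rw [habs, ENNReal.ofReal_mul (abs_nonneg _)]
    refine mul_le_mul_right ?_ _
    have : ENNReal.ofReal |dist a.1.2 b.1.2 - dist a.1.1 b.1.1|
        = edist (dist a.1.1 b.1.1) (dist a.1.2 b.1.2) := by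
      rw [edist_dist, Real.dist_eq, abs_sub_comm]
    rw [this]
    exact le_iSup₂_of_le a.1 a.2 (le_iSup₂_of_le b.1 b.2 le_rfl)
  have h1 : @ghDist R R ms mt ≤ @corrDis R R ms mt D / 2 := by
    unfold ghDist
    exact ENNReal.div_le_div_right (iInf₂_le D hDcorr) 2
  refine h1.trans ?_
  calc @corrDis R R ms mt D / 2 ≤ (ENNReal.ofReal |s - t| * corrDis R) / 2 :=
        ENNReal.div_le_div_right key 2
    _ = ENNReal.ofReal (|s - t| / 2) * corrDis R := by
        rw [ENNReal.ofReal_div_of_pos (by norm_num), ENNReal.ofReal_ofNat,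
          ENNReal.div_eq_inv_mul, ENNReal.div_eq_inv_mul, mul_comm (2 : ℝ≥0∞)⁻¹,
          mul_assoc, mul_comm (corrDis R)]
        ring
end

section
/- Let X, Y be metric spaces and R a correspondence between X and Y, and for t ∈ (0,1) let R_t be R with metric d_t((x,y),(x',y')) = (1−t)d_X(x,x') + t·d_Y(y,y'). Then d_GH(X, R_t) ≤ (t/2)·dis R and d_GH(R_t, Y) ≤ ((1−t)/2)·dis R. -/
open scoped ENNReal

/-- For `t ∈ (0,1)`, `d_GH(X, R_t) ≤ (t/2)·dis R` and `d_GH(R_t, Y) ≤ ((1-t)/2)·dis R`. -/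
theorem stmt13 {X Y : Type*} [mX : MetricSpace X] [mY : MetricSpace Y]
    (R : Set (X × Y)) (hR : IsCorr R)
    (t : ℝ) (ht : t ∈ Set.Ioo (0 : ℝ) 1)
    (mt : MetricSpace R)
    (hmt : ∀ a b : R, @dist R mt.toDist a b =
      (1 - t) * dist a.1.1 b.1.1 + t * dist a.1.2 b.1.2) :
    @ghDist X R mX mt ≤ ENNReal.ofReal (t / 2) * corrDis R ∧
    @ghDist R Y mt mY ≤ ENNReal.ofReal ((1 - t) / 2) * corrDis R := by
  obtain ⟨ht0, ht1⟩ := ht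
  constructor
  · set S : Set (X × R) := {p | p.2.1.1 = p.1} with hS
    have hScorr : IsCorr S := by
      constructor
      · intro x
        obtain ⟨y, hy⟩ := hR.1 x
        exact ⟨⟨(x, y), hy⟩, rfl⟩
      · intro r
        exact ⟨r.1.1, rfl⟩
    have hdis : corrDis S ≤ ENNReal.ofReal t * corrDis R := by
      refine iSup₂_le fun p hp => iSup₂_le fun q hq => ?_
      have hp' : p.2.1.1 = p.1 := hp
      have hq' : q.2.1.1 = q.1 := hq
      have key : edist (dist p.1 q.1) (@dist R mt.toDist p.2 q.2)
          = ENNReal.ofReal t * edist (dist p.2.1.1 q.2.1.1) (dist p.2.1.2 q.2.1.2) := by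
        rw [hmt, ← hp', ← hq', edist_dist, edist_dist, Real.dist_eq, Real.dist_eq]
        rw [show dist p.2.1.1 q.2.1.1 -
            ((1 - t) * dist p.2.1.1 q.2.1.1 + t * dist p.2.1.2 q.2.1.2)
            = t * (dist p.2.1.1 q.2.1.1 - dist p.2.1.2 q.2.1.2) by ring,
          abs_mul, abs_of_pos ht0, ENNReal.ofReal_mul ht0.le]
      rw [key]
      refine mul_le_mul_right ?_ _
      calc edist (dist p.2.1.1 q.2.1.1) (dist p.2.1.2 q.2.1.2)
          ≤ ⨆ q' ∈ R, edist (dist p.2.1.1 q'.1) (dist p.2.1.2 q'.2) :=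
            le_iSup₂_of_le q.2.1 q.2.2 le_rfl
        _ ≤ corrDis R := le_iSup₂_of_le p.2.1 p.2.2 le_rfl
    calc @ghDist X R mX mt ≤ corrDis S / 2 :=
          ENNReal.div_le_div_right (iInf₂_le S hScorr) 2
      _ ≤ (ENNReal.ofReal t * corrDis R) / 2 := ENNReal.div_le_div_right hdis 2
      _ = ENNReal.ofReal (t / 2) * corrDis R := by
          rw [ENNReal.ofReal_div_of_pos two_pos, ENNReal.ofReal_ofNat,
            ENNReal.div_eq_inv_mul, ENNReal.div_eq_inv_mul, mul_assoc]
  · set S : Set (R × Y) := {p | p.1.1.2 = p.2} with hS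
    have hScorr : IsCorr S := by
      constructor
      · intro r
        exact ⟨r.1.2, rfl⟩
      · intro y
        obtain ⟨x, hx⟩ := hR.2 y
        exact ⟨⟨(x, y), hx⟩, rfl⟩
    have hdis : corrDis S ≤ ENNReal.ofReal (1 - t) * corrDis R := by
      refine iSup₂_le fun p hp => iSup₂_le fun q hq => ?_
      have hp' : p.1.1.2 = p.2 := hp
      have hq' : q.1.1.2 = q.2 := hq
      have key : edist (@dist R mt.toDist p.1 q.1) (dist p.2 q.2)
          = ENNReal.ofReal (1 - t) * edist (dist p.1.1.1 q.1.1.1) (dist p.1.1.2 q.1.1.2) := by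
        have h1t : (0:ℝ) < 1 - t := by linarith
        rw [hmt, ← hp', ← hq', edist_dist, edist_dist, Real.dist_eq, Real.dist_eq]
        rw [show (1 - t) * dist p.1.1.1 q.1.1.1 + t * dist p.1.1.2 q.1.1.2
            - dist p.1.1.2 q.1.1.2
            = (1 - t) * (dist p.1.1.1 q.1.1.1 - dist p.1.1.2 q.1.1.2) by ring,
          abs_mul, abs_of_pos h1t, ENNReal.ofReal_mul h1t.le]
      rw [key]
      refine mul_le_mul_right ?_ _
      calc edist (dist p.1.1.1 q.1.1.1) (dist p.1.1.2 q.1.1.2)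
          ≤ ⨆ q' ∈ R, edist (dist p.1.1.1 q'.1) (dist p.1.1.2 q'.2) :=
            le_iSup₂_of_le q.1.1 q.1.2 le_rfl
        _ ≤ corrDis R := le_iSup₂_of_le p.1.1 p.1.2 le_rfl
    calc @ghDist R Y mt mY ≤ corrDis S / 2 :=
          ENNReal.div_le_div_right (iInf₂_le S hScorr) 2
      _ ≤ (ENNReal.ofReal (1 - t) * corrDis R) / 2 := ENNReal.div_le_div_right hdis 2
      _ = ENNReal.ofReal ((1 - t) / 2) * corrDis R := by
          rw [ENNReal.ofReal_div_of_pos two_pos, ENNReal.ofReal_ofNat,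
            ENNReal.div_eq_inv_mul, ENNReal.div_eq_inv_mul, mul_assoc]
end

section
/- For cardinals (or index sets) I and J with |I| ≠ |J|, and λ > 0, the simplexes λΔ_I and λΔ_J (spaces where all nonzero distances equal λ) satisfy d_GH(λΔ_I, λΔ_J) > 0 when one of them is finite and the other has strictly larger finite cardinality; specifically, for finite n < m, d_GH(λΔ_n, λΔ_m) = λ/2. -/
open scoped ENNReal

/-- For finite cardinalities `0 < n < m`, the simplexes `λΔ_n` and `λΔ_m`
(all nonzero distances equal to `λ`) satisfy `d_GH(λΔ_n, λΔ_m) = λ/2`; in particular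
the distance is positive. -/
theorem stmt17 (lam : ℝ) (hlam : 0 < lam) (n m : ℕ) (hn : 0 < n) (hnm : n < m)
    (mI : MetricSpace (Fin n)) (mJ : MetricSpace (Fin m))
    (hI : ∀ i j : Fin n, @dist _ mI.toDist i j = if i = j then 0 else lam)
    (hJ : ∀ i j : Fin m, @dist _ mJ.toDist i j = if i = j then 0 else lam) :
    @ghDist (Fin n) (Fin m) mI mJ = ENNReal.ofReal (lam / 2) ∧
    0 < @ghDist (Fin n) (Fin m) mI mJ := by
  have key : (⨅ (R : Set (Fin n × Fin m)) (_ : IsCorr R), @corrDis _ _ mI mJ R)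
      = ENNReal.ofReal lam := by
    apply le_antisymm
    · -- upper bound via the full correspondence
      have hcorr : IsCorr (Set.univ : Set (Fin n × Fin m)) := by
        exact ⟨fun x => ⟨⟨0, Nat.zero_lt_of_lt hnm⟩, trivial⟩, fun y => ⟨⟨0, hn⟩, trivial⟩⟩
      refine le_trans (iInf₂_le Set.univ hcorr) ?_
      unfold corrDis
      refine iSup₂_le fun p _ => iSup₂_le fun q _ => ?_
      rw [edist_dist, Real.dist_eq]
      apply ENNReal.ofReal_le_ofReal
      rw [abs_sub_le_iff]
      have h1 := hI p.1 q.1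
      have h2 := hJ p.2 q.2
      constructor <;> split_ifs at h1 h2 <;> simp [h1, h2] <;> linarith
    · -- lower bound: every correspondence has distortion ≥ lam
      refine le_iInf₂ fun R hR => ?_
      choose f hf using hR.2
      obtain ⟨y, y', hne, hfe⟩ : ∃ y y' : Fin m, y ≠ y' ∧ f y = f y' := by
        have : ¬ Function.Injective f := by
          intro hinj
          have := Fintype.card_le_of_injective f hinj
          simp at this
          omega
        simp only [Function.Injective] at this
        push_neg at this
        obtain ⟨a, b, hab, hne⟩ := this
        exact ⟨a, b, hne, hab⟩
      have hp : ((f y, y) : Fin n × Fin m) ∈ R := hf y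
      have hq : ((f y', y') : Fin n × Fin m) ∈ R := hf y'
      unfold corrDis
      refine le_trans ?_ (le_iSup₂_of_le (f y, y) hp (le_iSup₂_of_le (f y', y') hq le_rfl))
      have h1 : @dist _ mI.toDist (f y) (f y') = 0 := by rw [hI]; simp [hfe]
      have h2 : @dist _ mJ.toDist y y' = lam := by rw [hJ]; simp [hne]
      rw [h1, h2, edist_dist, Real.dist_eq]
      simp [abs_of_pos hlam]
  have heq : @ghDist (Fin n) (Fin m) mI mJ = ENNReal.ofReal (lam / 2) := by
    unfold ghDist
    rw [key, ENNReal.ofReal_div_of_pos (by norm_num)]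
    norm_num
  exact ⟨heq, by rw [heq]; exact ENNReal.ofReal_pos.2 (by linarith)⟩
end
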